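/- arXiv:1910.11716 — 4 statements merged into one kernel-verified Lean document; each statement's English description precedes it below -/
import Mathlib

section
/- Let X be a locally path-connected topological space and let π : E → X be a covering map. Let n ∈ ℕ, let W₀, …, Wₙ be open path-connected subsets of X, let x ∈ ⋂ⱼ Wⱼ, and let x̃ ∈ E with π(x̃) = x. For each j let Vⱼ be the path component of π⁻¹(Wⱼ) containing x̃. Then x̃ ∈ ⋂ⱼ Vⱼ (so ⋂ⱼ Vⱼ ≠ ∅), π(Vⱼ) = Wⱼ for every j, and if the sets W₀, …, Wₙ are pairwise distinct, then V₀, …, Vₙ are pairwise distinct. (In other words, every n-simplex of the nerve of the cover lifts to an n-simplex of the nerve of the lifted cover.) -/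
/-- `V` is a path component of `A`: an equivalence class of points of `A` under
the relation "joined by a path lying inside `A`", regarded as a subset of the
ambient space. -/
def IsPathComponentIn {E : Type*} [TopologicalSpace E] (V A : Set E) : Prop :=
  ∃ x ∈ A, V = pathComponentIn A x

/-!
Path lifting does all the work: a path inside `W` from `π x̃` to `w` lifts to a path starting
at `x̃`, which stays in `π⁻¹ W` and ends over `w`, so `π` maps the path component of `x̃` in
`π⁻¹ W` onto `W`.
-/

namespace IsCoveringMap

variable {E X : Type*} [TopologicalSpace E] [TopologicalSpace X] {π : E → X}

theorem exists_joinedIn_preimage_of_joinedIn (hπ : IsCoveringMap π) {W : Set X} {e : E} {y : X}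
    (h : JoinedIn W (π e) y) : ∃ e' : E, π e' = y ∧ JoinedIn (π ⁻¹' W) e e' := by
  obtain ⟨γ, hγW⟩ := h
  let Γ := hπ.liftPath γ.toContinuousMap e γ.source
  have hΓ : ∀ t, π (Γ t) = γ t := congrFun (hπ.liftPath_lifts γ.toContinuousMap e γ.source)
  refine ⟨Γ 1, (hΓ 1).trans γ.target, ⟨⟨Γ, hπ.liftPath_zero .., rfl⟩, fun t => ?_⟩⟩
  change π (Γ t) ∈ W
  exact (hΓ t).symm ▸ hγW t

theorem image_pathComponentIn_preimage (hπ : IsCoveringMap π) {W : Set X}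
    (hW : IsPathConnected W) {e : E} (he : π e ∈ W) :
    π '' pathComponentIn (π ⁻¹' W) e = W := by
  refine subset_antisymm ?_ fun y hy => ?_
  · rintro _ ⟨e', he', rfl⟩
    exact pathComponentIn_subset (F := π ⁻¹' W) he'
  · obtain ⟨e', rfl, he'⟩ := hπ.exists_joinedIn_preimage_of_joinedIn (hW.joinedIn _ he y hy)
    exact ⟨e', he', rfl⟩

end IsCoveringMap

theorem stmt3_general {E X : Type*} [TopologicalSpace E] [TopologicalSpace X]
    (π : E → X) (hπ : IsCoveringMap π)
    (n : ℕ) (W : Fin (n + 1) → Set X)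
    (hWpc : ∀ j, IsPathConnected (W j))
    (x : X) (hx : x ∈ ⋂ j, W j) (xt : E) (hxt : π xt = x)
    (V : Fin (n + 1) → Set E)
    (hV : ∀ j, V j = pathComponentIn (π ⁻¹' (W j)) xt) :
    (xt ∈ ⋂ j, V j) ∧ (∀ j, π '' V j = W j) ∧
      (Function.Injective W → Function.Injective V) := by
  have hxtW : ∀ j, π xt ∈ W j := fun j => hxt ▸ Set.mem_iInter.1 hx j
  have himage : ∀ j, π '' V j = W j := fun j => by
    rw [hV j, hπ.image_pathComponentIn_preimage (hWpc j) (hxtW j)]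
  refine ⟨Set.mem_iInter.2 fun j => ?_, himage, fun hW i j hij => hW ?_⟩
  · rw [hV j]
    exact mem_pathComponentIn_self (hxtW j)
  · rw [← himage i, ← himage j, hij]

theorem stmt3 {E X : Type*} [TopologicalSpace E] [TopologicalSpace X]
    [LocallyPathConnectedSpace X] (π : E → X) (hπ : IsCoveringMap π)
    (n : ℕ) (W : Fin (n + 1) → Set X)
    (hWopen : ∀ j, IsOpen (W j)) (hWpc : ∀ j, IsPathConnected (W j))
    (x : X) (hx : x ∈ ⋂ j, W j) (xt : E) (hxt : π xt = x)
    (V : Fin (n + 1) → Set E)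
    (hV : ∀ j, V j = pathComponentIn (π ⁻¹' (W j)) xt) :
    (xt ∈ ⋂ j, V j) ∧ (∀ j, π '' V j = W j) ∧
      (Function.Injective W → Function.Injective V) :=
  stmt3_general π hπ n W hWpc x hx xt hxt V hV
end

section
/- Let X be a locally path-connected topological space, let π : E → X be a covering map, let W ⊆ X be an open subset, let φ : X → ℝ be a continuous function with φ(x) = 0 for all x ∉ W, and let V be a path component of π⁻¹(W). Then the function E → ℝ given by the indicator of V times φ ∘ π (that is, x̃ ↦ φ(π(x̃)) if x̃ ∈ V and x̃ ↦ 0 otherwise) is continuous. -/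
/-!
A covering map is a local homeomorphism, so `E` is locally path-connected along with `X`.
Hence every path component `V` of the open set `π ⁻¹' W` is open, and it is also closed in
`π ⁻¹' W` (a point of `π ⁻¹' W` near `V` is joined to `V` inside `π ⁻¹' W`). So the frontier
of `V` lies outside `π ⁻¹' W`, where `φ ∘ π` vanishes, and the indicator is continuous.
-/

open Set Topology

theorem IsLocalHomeomorph.locallyPathConnectedSpace {E X : Type*} [TopologicalSpace E]
    [TopologicalSpace X] [LocallyPathConnectedSpace X] {π : E → X}
    (hπ : IsLocalHomeomorph π) : LocallyPathConnectedSpace E := by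
  choose p hp _ using hπ
  have hbasis (e : E) : (𝓝 e).HasBasis
      (fun s ↦ s ∈ 𝓝 (p e e) ∧ IsPathConnected s ∧ s ⊆ (p e).target) ((p e).symm '' ·) := by
    rw [← (p e).symm_map_nhds_eq (hp e)]
    exact (pathConnected_subset_basis (p e).open_target ((p e).map_source (hp e))).map _
  exact .of_bases hbasis fun e s ⟨_, hs, hst⟩ ↦ hs.image' ((p e).continuousOn_symm.mono hst)

section LocallyPathConnectedSpace

variable {E : Type*} [TopologicalSpace E] [LocallyPathConnectedSpace E] {A : Set E}

theorem IsOpen.closure_pathComponentIn_inter_subset (hA : IsOpen A) (x : E) :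
    closure (pathComponentIn A x) ∩ A ⊆ pathComponentIn A x := by
  rintro a ⟨ha_closure, haA⟩
  obtain ⟨b, hab, hxb⟩ := mem_closure_iff_nhds.mp ha_closure _
    (pathComponentIn_mem_nhds (hA.mem_nhds haA))
  exact JoinedIn.trans hxb (JoinedIn.symm hab)

theorem IsOpen.frontier_pathComponentIn_subset (hA : IsOpen A) (x : E) :
    frontier (pathComponentIn A x) ⊆ Aᶜ := by
  rw [(hA.pathComponentIn x).frontier_eq]
  rintro a ⟨ha_closure, haV⟩ haA
  exact haV (hA.closure_pathComponentIn_inter_subset x ⟨ha_closure, haA⟩)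

theorem IsOpen.continuous_indicator_pathComponentIn {M : Type*} [TopologicalSpace M] [Zero M]
    (hA : IsOpen A) {f : E → M} (hf : Continuous f) (hf0 : ∀ y ∉ A, f y = 0) (x : E) :
    Continuous ((pathComponentIn A x).indicator f) :=
  hf.indicator fun _ ha ↦ hf0 _ (hA.frontier_pathComponentIn_subset x ha)

end LocallyPathConnectedSpace

theorem stmt6 {E X : Type*} [TopologicalSpace E] [TopologicalSpace X]
    [LocallyPathConnectedSpace X] (π : E → X) (hπ : IsCoveringMap π)
    (W : Set X) (hWopen : IsOpen W)
    (φ : X → ℝ) (hφ : Continuous φ) (hφ0 : ∀ x ∉ W, φ x = 0)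
    (V : Set E) (hV : IsPathComponentIn V (π ⁻¹' W)) :
    Continuous (Set.indicator V (φ ∘ π)) := by
  have := hπ.isLocalHomeomorph.locallyPathConnectedSpace
  obtain ⟨x, -, rfl⟩ := hV
  exact (hWopen.preimage hπ.continuous).continuous_indicator_pathComponentIn
    (hφ.comp hπ.continuous) (fun _ ↦ hφ0 _) x
end

section
/- Let X be a locally path-connected topological space and let π : E → X be a covering map. Let n ∈ ℕ, let W₀, …, Wₙ be open path-connected subsets of X, and for each j let Vⱼ be a path component of π⁻¹(Wⱼ); assume V₀, …, Vₙ are pairwise distinct and ⋂ⱼ Vⱼ ≠ ∅. Let γ : E → E be a homeomorphism with π ∘ γ = π such that for every j there exists k with γ(Vⱼ) = V_k (γ permutes the set {V₀, …, Vₙ}). Then γ(Vⱼ) = Vⱼ for every j. (A deck transformation stabilising a simplex of the lifted nerve fixes each of its vertices.) -/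
open Set Function

theorem IsPathComponentIn.eq_pathComponentIn {E : Type*} [TopologicalSpace E] {V A : Set E}
    (hV : IsPathComponentIn V A) {x : E} (hx : x ∈ V) : V = pathComponentIn A x := by
  obtain ⟨y, -, rfl⟩ := hV
  exact (pathComponentIn_congr hx).symm

theorem Homeomorph.image_pathComponentIn {X Y : Type*} [TopologicalSpace X]
    [TopologicalSpace Y] (γ : X ≃ₜ Y) (F : Set X) (x : X) :
    γ '' pathComponentIn F x = pathComponentIn (γ '' F) (γ x) := by
  ext y
  constructor
  · rintro ⟨z, hz, rfl⟩
    exact hz.map γ.continuous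
  · intro hy
    refine ⟨γ.symm y, ?_, γ.apply_symm_apply y⟩
    show JoinedIn F x (γ.symm y)
    simpa [image_image] using hy.map γ.symm.continuous

theorem Equiv.image_preimage_of_comp_eq {α β : Type*} (e : α ≃ α) {π : α → β}
    (he : π ∘ e = π) (S : Set β) : e '' (π ⁻¹' S) = π ⁻¹' S := by
  have he' : π ∘ e.symm = π := by
    rw [← he, comp_assoc, e.self_comp_symm, comp_id, he]
  rw [e.image_eq_preimage_symm, ← preimage_comp, he']

theorem Homeomorph.image_pathComponentIn_preimage {E X : Type*} [TopologicalSpace E]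
    (γ : E ≃ₜ E) {π : E → X} (hγ : π ∘ γ = π) (W : Set X) (x : E) :
    γ '' pathComponentIn (π ⁻¹' W) x = pathComponentIn (π ⁻¹' W) (γ x) := by
  have hW : γ '' (π ⁻¹' W) = π ⁻¹' W := γ.toEquiv.image_preimage_of_comp_eq hγ W
  rw [γ.image_pathComponentIn, hW]

theorem exists_image_eq_of_forall_exists_image_eq {α ι : Type*} [Finite ι] {f : α → α}
    (hf : Injective f) {V : ι → Set α} (h : ∀ i, ∃ j, f '' V i = V j) (j : ι) :
    ∃ i, f '' V i = V j := by
  have hmaps : ∀ s ∈ range V, f '' s ∈ range V := by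
    rintro _ ⟨i, rfl⟩
    obtain ⟨k, hk⟩ := h i
    exact ⟨k, hk.symm⟩
  let g : range V → range V := fun s => ⟨f '' s, hmaps s s.2⟩
  have hg : Injective g := fun s t hst =>
    Subtype.ext (image_injective.mpr hf (congrArg Subtype.val hst))
  obtain ⟨⟨_, i, rfl⟩, hi⟩ := Finite.surjective_of_injective hg ⟨V j, j, rfl⟩
  exact ⟨i, congrArg Subtype.val hi⟩

theorem mem_iInter_of_forall_exists_image_eq {α ι : Type*} [Finite ι] {f : α → α}
    (hf : Injective f) {V : ι → Set α} (h : ∀ i, ∃ j, f '' V i = V j) {x : α}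
    (hx : x ∈ ⋂ i, V i) : f x ∈ ⋂ i, V i := by
  refine mem_iInter.mpr fun j => ?_
  obtain ⟨i, hi⟩ := exists_image_eq_of_forall_exists_image_eq hf h j
  exact hi ▸ mem_image_of_mem f (mem_iInter.mp hx i)

theorem stmt9_general {E X : Type*} [TopologicalSpace E]
    (π : E → X)
    (n : ℕ) (W : Fin (n + 1) → Set X)
    (V : Fin (n + 1) → Set E)
    (hV : ∀ j, IsPathComponentIn (V j) (π ⁻¹' (W j)))
    (hVne : (⋂ j, V j).Nonempty)
    (γ : E ≃ₜ E) (hγ : π ∘ γ = π)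
    (hperm : ∀ j, ∃ k, ⇑γ '' V j = V k) :
    ∀ j, ⇑γ '' V j = V j := by
  obtain ⟨e, he⟩ := hVne
  have hγe : γ e ∈ ⋂ j, V j := mem_iInter_of_forall_exists_image_eq γ.injective hperm he
  intro j
  calc γ '' V j = γ '' pathComponentIn (π ⁻¹' W j) e := by
        rw [← (hV j).eq_pathComponentIn (mem_iInter.mp he j)]
    _ = pathComponentIn (π ⁻¹' W j) (γ e) := γ.image_pathComponentIn_preimage hγ _ _
    _ = V j := ((hV j).eq_pathComponentIn (mem_iInter.mp hγe j)).symm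

theorem stmt9 {E X : Type*} [TopologicalSpace E] [TopologicalSpace X]
    [LocallyPathConnectedSpace X] (π : E → X) (hπ : IsCoveringMap π)
    (n : ℕ) (W : Fin (n + 1) → Set X)
    (hWopen : ∀ j, IsOpen (W j)) (hWpc : ∀ j, IsPathConnected (W j))
    (V : Fin (n + 1) → Set E)
    (hV : ∀ j, IsPathComponentIn (V j) (π ⁻¹' (W j)))
    (hVinj : Function.Injective V)
    (hVne : (⋂ j, V j).Nonempty)
    (γ : E ≃ₜ E) (hγ : π ∘ γ = π)
    (hperm : ∀ j, ∃ k, ⇑γ '' V j = V k) :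
    ∀ j, ⇑γ '' V j = V j :=
  stmt9_general π n W V hV hVne γ hγ hperm
end

section
/- Let C be a maximal cyclic subgroup of the free group F₂ on two generators, i.e., C is cyclic and every cyclic subgroup of F₂ containing C equals C. Then the normaliser of C in F₂ is C itself: Subgroup.normalizer C = C. -/
/-!
Write `C = ⟨c⟩`. By Nielsen–Schreier an abelian subgroup of a free group is free, and a free
group whose generators commute has at most one generator, so it is cyclic; maximality of `C`
therefore puts every element commuting with `c` into `C`. An element `n` normalising `C`
conjugates `c` to a generator of the infinite cyclic group `C`, i.e. to `c` or `c⁻¹`. In the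
first case `n ∈ C`. In the second `n²` commutes with `c`, so `n² ∈ C` is both fixed and inverted
by conjugation with `n`; torsion-freeness then gives `n² = 1` and `n = 1`.
-/

open Subgroup

theorem IsFreeGroup.not_commute_of_ne {G : Type*} [Group G] [IsFreeGroup G]
    {a b : IsFreeGroup.Generators G} (hab : a ≠ b) :
    ¬Commute (IsFreeGroup.of a) (IsFreeGroup.of b) := by
  classical
  intro h
  let φ : G →* Equiv.Perm (Fin 3) :=
    IsFreeGroup.lift fun x => if x = a then Equiv.swap 0 1 else Equiv.swap 1 2
  have := h.map φ
  simp only [φ, IsFreeGroup.lift_of, if_pos, if_neg hab.symm] at this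
  exact absurd this (by unfold Commute SemiconjBy; decide)

theorem IsFreeGroup.isCyclic_of_isMulCommutative (G : Type*) [Group G] [IsFreeGroup G]
    [IsMulCommutative G] : IsCyclic G := by
  have : Subsingleton (IsFreeGroup.Generators G) :=
    ⟨fun a b => by_contra fun hab => IsFreeGroup.not_commute_of_ne hab (mul_comm' _ _)⟩
  cases isEmpty_or_nonempty (IsFreeGroup.Generators G)
  · have : Subsingleton G := (IsFreeGroup.toFreeGroup G).subsingleton_congr.2 inferInstance
    infer_instance
  · have : Unique (IsFreeGroup.Generators G) := uniqueOfSubsingleton (Classical.arbitrary _)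
    exact isCyclic_of_surjective _ (IsFreeGroup.toFreeGroup G).symm.surjective

theorem IsFreeGroup.isCyclic_closure_pair {G : Type*} [Group G] [IsFreeGroup G] {a b : G}
    (h : Commute a b) : IsCyclic (closure {a, b}) := by
  have : IsMulCommutative (closure {a, b}) := isMulCommutative_closure <| by
    rintro x (rfl | rfl) y (rfl | rfl)
    exacts [rfl, h, h.symm, rfl]
  exact IsFreeGroup.isCyclic_of_isMulCommutative _

theorem IsFreeGroup.mem_zpowers_of_commute_of_maximal {G : Type*} [Group G] [IsFreeGroup G]
    {c g : G} (hmax : ∀ D : Subgroup G, IsCyclic D → zpowers c ≤ D → D = zpowers c)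
    (h : Commute c g) : g ∈ zpowers c := by
  rw [← hmax _ (isCyclic_closure_pair h) (zpowers_le.2 (subset_closure (Set.mem_insert _ _)))]
  exact subset_closure (Set.mem_insert_of_mem _ rfl)

theorem Subgroup.conj_eq_self_or_inv_of_mem_normalizer_zpowers {G : Type*} [Group G]
    [IsMulTorsionFree G] {c n : G} (hn : n ∈ normalizer (zpowers c)) :
    n * c * n⁻¹ = c ∨ n * c * n⁻¹ = c⁻¹ := by
  rcases eq_or_ne c 1 with rfl | hc
  · simp
  rw [mem_normalizer_iff_map_conj_eq, MonoidHom.map_zpowers] at hn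
  exact ((zpowers_eq_zpowers_iff (not_isOfFinOrder_of_isMulTorsionFree hc)).1 hn.symm).imp
    Eq.symm Eq.symm

theorem commute_sq_of_conj_eq_inv {G : Type*} [Group G] {c n : G} (h : n * c * n⁻¹ = c⁻¹) :
    Commute c (n ^ 2) := by
  have h' : n * c⁻¹ * n⁻¹ = c := by
    rw [show n * c⁻¹ * n⁻¹ = (n * c * n⁻¹)⁻¹ by group, h, inv_inv]
  calc c * n ^ 2 = n * c⁻¹ * n⁻¹ * n ^ 2 := by rw [h']
    _ = n * (n * c * n⁻¹) * n := by rw [h]; group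
    _ = n ^ 2 * c := by simp only [sq, mul_assoc, inv_mul_cancel, mul_one]

theorem eq_one_of_conj_eq_inv_of_sq_mem_zpowers {G : Type*} [Group G] [IsMulTorsionFree G]
    {c n : G} (h : n * c * n⁻¹ = c⁻¹) (hn : n ^ 2 ∈ zpowers c) : n = 1 := by
  obtain ⟨j, hj⟩ := mem_zpowers_iff.1 hn
  have hinv : n ^ 2 = (n ^ 2)⁻¹ := calc
    n ^ 2 = n * n ^ 2 * n⁻¹ := by group
    _ = (n * c * n⁻¹) ^ j := by rw [← hj, conj_zpow]
    _ = (n ^ 2)⁻¹ := by rw [h, inv_zpow, hj]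
  rw [← sq_eq_one, ← sq_eq_one, sq (n ^ 2)]
  nth_rw 2 [hinv]
  exact mul_inv_cancel _

theorem stmt11 (C : Subgroup (FreeGroup (Fin 2))) (hC : IsCyclic C)
    (hmax : ∀ D : Subgroup (FreeGroup (Fin 2)), IsCyclic D → C ≤ D → D = C) :
    Subgroup.normalizer C = C := by
  obtain ⟨c, rfl⟩ := C.isCyclic_iff_exists_zpowers_eq_top.1 hC
  have mem_of_commute {g} : Commute c g → g ∈ zpowers c :=
    IsFreeGroup.mem_zpowers_of_commute_of_maximal hmax
  refine le_antisymm (fun n hn => ?_) le_normalizer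
  rcases conj_eq_self_or_inv_of_mem_normalizer_zpowers hn with h | h
  · exact mem_of_commute (mul_inv_eq_iff_eq_mul.1 h).symm
  · rw [eq_one_of_conj_eq_inv_of_sq_mem_zpowers h (mem_of_commute (commute_sq_of_conj_eq_inv h))]
    exact one_mem _
end
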